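/- arXiv:1110.5201 — 2 statements merged into one kernel-verified Lean document; each statement's English description precedes it below -/
import Mathlib

section
/- Let (X, 𝔅, μ) be a standard Borel probability space and let P be a finite measurable partition of X which is μ-roughly equal with parameters α > 0, n ∈ ℕ, h > 0. Then for every β > 0 there exists γ > 0 such that for every sub-σ-algebra 𝔉 ⊆ 𝔅 with H_μ(P|𝔉) > H_μ(P) − γ, there is a measurable set Z ⊆ X with μ(Z) ≥ 1 − β on which the disintegration measures μ_z of μ over 𝔉 satisfy: P is μ_z-roughly equal with parameters α, n, h, and the good atoms can be taken the same for all z ∈ Z, namely every μ-good atom Pᵢ of P satisfies 2^{−n(h+α)} < μ_z(Pᵢ) < 2^{−n(h−α)} and the total μ_z-measure of the μ-good atoms exceeds 1 − α. -/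
open MeasureTheory ProbabilityTheory

/-- `P` is a finite measurable partition of `X` (indexed by a finite index type). -/
structure IsPartition {X : Type*} [mX : MeasurableSpace X] {ι : Type*} (P : ι → Set X) :
    Prop where
  meas : ∀ i, MeasurableSet (P i)
  disj : Pairwise (Function.onFun Disjoint P)
  cover : ⋃ i, P i = Set.univ

/-- The Shannon entropy (base 2) of the probability vector of a finite partition `P`
with respect to `μ`. -/
noncomputable def entropyH {X : Type*} [mX : MeasurableSpace X] {ι : Type*} [Fintype ι]
    (μ : Measure X) (P : ι → Set X) : ℝ :=
  - ∑ i, (μ (P i)).toReal * Real.logb 2 (μ (P i)).toReal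

/-- The atom `P i` is a good atom of `P` for the measure `ν` (with parameters `ε, n, h`):
its measure lies strictly between `2 ^ (-n (h + ε))` and `2 ^ (-n (h - ε))`. -/
def GoodAtom {X : Type*} [mX : MeasurableSpace X] {ι : Type*}
    (ν : Measure X) (P : ι → Set X) (ε : ℝ) (n : ℕ) (h : ℝ) (i : ι) : Prop :=
  (2 : ℝ) ^ (-(n : ℝ) * (h + ε)) < (ν (P i)).toReal ∧
    (ν (P i)).toReal < (2 : ℝ) ^ (-(n : ℝ) * (h - ε))

open scoped Classical in
/-- The partition `P` is `ν`-roughly equal with parameters `ε, n, h`: the good atoms carry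
total measure greater than `1 - ε`. -/
noncomputable def RoughlyEqual {X : Type*} [mX : MeasurableSpace X] {ι : Type*} [Fintype ι]
    (ν : Measure X) (P : ι → Set X) (ε : ℝ) (n : ℕ) (h : ℝ) : Prop :=
  1 - ε < ∑ i ∈ Finset.univ.filter (GoodAtom ν P ε n h), (ν (P i)).toReal

open scoped Classical in
/-- `P` is `ν`-roughly equal with parameters `α, n, h`, with the same good atoms as for `μ`:
every `μ`-good atom is also `ν`-good, and the `μ`-good atoms carry `ν`-measure more
than `1 - α`. -/
noncomputable def RoughlyEqualSameGood {X : Type*} [mX : MeasurableSpace X] {ι : Type*}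
    [Fintype ι] (μ ν : Measure X) (P : ι → Set X) (α : ℝ) (n : ℕ) (h : ℝ) : Prop :=
  RoughlyEqual ν P α n h ∧
  (∀ i, GoodAtom μ P α n h i → GoodAtom ν P α n h i) ∧
  1 - α < ∑ i ∈ Finset.univ.filter (GoodAtom μ P α n h), (ν (P i)).toReal

/-- The conditional entropy `H_μ(P | 𝔉) = ∑_{A ∈ P} ∫ φ(μ[1_A | 𝔉]) dμ` of a finite
partition `P` given a σ-algebra `F`, where `φ(t) = -t log₂ t`. -/
noncomputable def condEntropyAlg {X : Type*} [mX : MeasurableSpace X] (μ : Measure X)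
    (F : MeasurableSpace X) {ι : Type*} [Fintype ι] (P : ι → Set X) : ℝ :=
  ∑ i, ∫ x, -((μ[(P i).indicator (fun _ => (1 : ℝ)) | F]) x *
      Real.logb 2 ((μ[(P i).indicator (fun _ => (1 : ℝ)) | F]) x)) ∂μ

/-! `t ↦ t log t` is `1`-strongly convex on `[0, 1]`, so a `[0, 1]`-valued `f` with mean `p`
satisfies `∫ (f - p)² ≤ 2 (∫ f log f - p log p)`. Applied to `z ↦ μ_z(Pᵢ)` and summed over the
atoms, this bounds `∫ ∑ᵢ (μ_z(Pᵢ) - μ(Pᵢ))² dμ(z)` by `2 log 2 (H_μ(P) - H_μ(P|𝔉)) < 2 log 2 · γ`,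
so by Chebyshev the vector `(μ_z(Pᵢ))ᵢ` is close to `(μ(Pᵢ))ᵢ` off a set of measure `β`. Being
roughly equal with the `μ`-good atoms is given by finitely many strict inequalities on this vector,
an open condition that holds at `(μ(Pᵢ))ᵢ`, hence near it. -/

open Real Set

theorem log_sub_self_monotoneOn : MonotoneOn (fun x => log x - x) (Ioc 0 1) := by
  rintro x ⟨hx0, -⟩ y ⟨hy0, hy1⟩ hxy
  have hlog : 1 - x / y ≤ log y - log x := by
    have := one_sub_inv_le_log_of_pos (div_pos hy0 hx0)
    rwa [inv_div, log_div hy0.ne' hx0.ne'] at this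
  have hdiv : y - x ≤ 1 - x / y := by
    rw [le_sub_iff_add_le, ← le_sub_iff_add_le', div_le_iff₀ hy0]
    nlinarith
  dsimp only
  linarith

theorem sq_sub_div_two_le_mul_log_sub_tangent {p t : ℝ} (hp : 0 < p) (hp1 : p ≤ 1)
    (ht : 0 ≤ t) (ht1 : t ≤ 1) :
    (t - p) ^ 2 / 2 ≤ t * log t - (t * log p + (t - p)) := by
  set G : ℝ → ℝ := fun x => x * log x - (x * log p + (x - p)) - (x - p) ^ 2 / 2
  have hG : Continuous G := by fun_prop
  have hG' : ∀ x, 0 < x → HasDerivAt G ((log x - x) - (log p - p)) x := by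
    intro x hx
    have hsq : HasDerivAt (fun y => (y - p) ^ 2 / 2) (x - p) x := by
      simpa using (((hasDerivAt_id x).sub_const p).pow 2).div_const (2 : ℝ)
    have := ((hasDerivAt_mul_log hx.ne').sub
      (((hasDerivAt_id x).mul_const (log p)).add ((hasDerivAt_id x).sub_const p))).sub hsq
    exact this.congr_deriv (by ring)
  suffices G p ≤ G t by simp only [G] at this; linarith
  rcases le_total p t with hpt | htp
  · refine monotoneOn_of_hasDerivWithinAt_nonneg (convex_Icc p 1) hG.continuousOn
      (f' := fun x => (log x - x) - (log p - p)) (fun x hx => ?_) (fun x hx => ?_)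
      ⟨le_rfl, hp1⟩ ⟨hpt, ht1⟩ hpt <;> rw [interior_Icc] at hx
    · exact (hG' x (hp.trans hx.1)).hasDerivWithinAt
    · exact sub_nonneg.2 (log_sub_self_monotoneOn ⟨hp, hp1⟩ ⟨hp.trans hx.1, hx.2.le⟩ hx.1.le)
  · refine antitoneOn_of_hasDerivWithinAt_nonpos (convex_Icc 0 p) hG.continuousOn
      (f' := fun x => (log x - x) - (log p - p)) (fun x hx => ?_) (fun x hx => ?_)
      ⟨ht, htp⟩ ⟨hp.le, le_rfl⟩ htp <;> rw [interior_Icc] at hx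
    · exact (hG' x hx.1).hasDerivWithinAt
    · exact sub_nonpos.2 (log_sub_self_monotoneOn ⟨hx.1, hx.2.le.trans hp1⟩ ⟨hp, hp1⟩ hx.2.le)

theorem abs_mul_log_le_one {t : ℝ} (ht : t ∈ Icc (0 : ℝ) 1) : |t * log t| ≤ 1 := by
  rcases ht.1.eq_or_lt with rfl | ht0
  · simp
  · exact mul_comm t _ ▸ (abs_log_mul_self_lt t ht0 ht.2).le

section UnitIntervalValued

variable {Ω : Type*} [MeasurableSpace Ω] {μ : Measure Ω} {f : Ω → ℝ}

theorem integrable_sq_sub_of_mem_Icc [IsFiniteMeasure μ] (hf : AEStronglyMeasurable f μ)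
    (hf01 : ∀ᵐ x ∂μ, f x ∈ Icc (0 : ℝ) 1) {c : ℝ} (hc : c ∈ Icc (0 : ℝ) 1) :
    Integrable (fun x => (f x - c) ^ 2) μ := by
  refine .of_bound (by fun_prop) 1 ?_
  filter_upwards [hf01] with x hx
  rw [norm_pow, Real.norm_eq_abs, sq_le_one_iff_abs_le_one, abs_abs]
  exact abs_sub_le_iff.2 ⟨by linarith [hx.2, hc.1], by linarith [hx.1, hc.2]⟩

theorem integral_sq_sub_le_two_mul_integral_mul_log_sub [IsProbabilityMeasure μ]
    (hf : AEStronglyMeasurable f μ) (hf01 : ∀ᵐ x ∂μ, f x ∈ Icc (0 : ℝ) 1) {p : ℝ}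
    (hp : ∫ x, f x ∂μ = p) :
    ∫ x, (f x - p) ^ 2 ∂μ ≤ 2 * (∫ x, f x * log (f x) ∂μ - p * log p) := by
  have hf_int : Integrable f μ := .of_bound hf 1 <| by
    filter_upwards [hf01] with x hx
    rw [Real.norm_eq_abs, abs_of_nonneg hx.1]; exact hx.2
  have hp0 : 0 ≤ p := hp ▸ integral_nonneg_of_ae (hf01.mono fun x hx => hx.1)
  have hp1 : p ≤ 1 := by
    simpa [hp] using integral_mono_ae hf_int (integrable_const 1) (hf01.mono fun x hx => hx.2)
  rcases hp0.eq_or_lt with rfl | hp0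
  · have hf0 : f =ᵐ[μ] 0 :=
      (integral_eq_zero_iff_of_nonneg_ae (hf01.mono fun x hx => hx.1) hf_int).1 hp
    rw [integral_eq_zero_of_ae (hf0.mono fun x hx => by simp [hx]),
      integral_eq_zero_of_ae (hf0.mono fun x hx => by simp [hx])]
    simp
  have hflog_int : Integrable (fun x => f x * log (f x)) μ :=
    .of_bound (continuous_mul_log.comp_aestronglyMeasurable hf) 1 <|
      hf01.mono fun x hx => abs_mul_log_le_one hx
  have htangent_int : Integrable (fun x => f x * log p + (f x - p)) μ :=
    (hf_int.mul_const _).add (hf_int.sub (integrable_const p))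
  have htangent : ∫ x, (f x * log p + (f x - p)) ∂μ = p * log p := by
    rw [integral_add (g := fun x => f x - p) (hf_int.mul_const _) (hf_int.sub (integrable_const p)),
      integral_mul_const, integral_sub hf_int (integrable_const p), hp]
    simp
  have hmono : ∫ x, (f x - p) ^ 2 / 2 ∂μ ≤
      ∫ x, (f x * log (f x) - (f x * log p + (f x - p))) ∂μ :=
    integral_mono_ae ((integrable_sq_sub_of_mem_Icc hf hf01 ⟨hp0.le, hp1⟩).div_const 2)
      (hflog_int.sub htangent_int)
      (hf01.mono fun x hx => sq_sub_div_two_le_mul_log_sub_tangent hp0 hp1 hx.1 hx.2)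
  rw [integral_div, integral_sub hflog_int htangent_int, htangent] at hmono
  linarith

end UnitIntervalValued

theorem ofReal_one_sub_le_measure_compl {Ω : Type*} [MeasurableSpace Ω] {μ : Measure Ω}
    [IsProbabilityMeasure μ] {s : Set Ω} (hs : MeasurableSet s) {β : ℝ} (hsβ : μ.real s ≤ β) :
    ENNReal.ofReal (1 - β) ≤ μ sᶜ := by
  rw [← ofReal_measureReal, probReal_compl_eq_one_sub hs]
  exact ENNReal.ofReal_le_ofReal (by linarith)

section Disintegration

-- `mX` comes after `F`, so it is the ambient instance here; being implicit, it is found by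
-- unification even where a caller has `F` as its local instance.
variable {X : Type*} {F : MeasurableSpace X} {mX : MeasurableSpace X} [StandardBorelSpace X]
  {μ : Measure X} [IsProbabilityMeasure μ] {s : Set X}

theorem toReal_condExpKernel_mem_Icc (z : X) : (condExpKernel μ F z s).toReal ∈ Icc (0 : ℝ) 1 :=
  ⟨ENNReal.toReal_nonneg, measureReal_le_one⟩

theorem measurable_toReal_condExpKernel (hF : F ≤ mX) (hs : MeasurableSet s) :
    Measurable fun z => (condExpKernel μ F z s).toReal :=
  ((measurable_condExpKernel hs).mono hF le_rfl).ennreal_toReal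

theorem integrable_sq_toReal_condExpKernel_sub (hF : F ≤ mX) (hs : MeasurableSet s) :
    Integrable (fun z => ((condExpKernel μ F z s).toReal - (μ s).toReal) ^ 2) μ :=
  integrable_sq_sub_of_mem_Icc (measurable_toReal_condExpKernel hF hs).aestronglyMeasurable
    (ae_of_all _ toReal_condExpKernel_mem_Icc) ⟨ENNReal.toReal_nonneg, measureReal_le_one⟩

theorem integral_sq_toReal_condExpKernel_sub_le (hF : F ≤ mX) (hs : MeasurableSet s) :
    ∫ z, ((condExpKernel μ F z s).toReal - (μ s).toReal) ^ 2 ∂μ ≤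
      2 * log 2 * (-((μ s).toReal * logb 2 (μ s).toReal) -
        ∫ x, -((μ[s.indicator (fun _ => (1 : ℝ)) | F]) x *
          logb 2 ((μ[s.indicator (fun _ => (1 : ℝ)) | F]) x)) ∂μ) := by
  set g : X → ℝ := fun z => (condExpKernel μ F z s).toReal
  have hg_ae : g =ᵐ[μ] μ[s.indicator (fun _ => (1 : ℝ)) | F] := condExpKernel_ae_eq_condExp hF hs
  have hg_int : ∫ z, g z ∂μ = (μ s).toReal := by
    rw [integral_congr_ae hg_ae, integral_condExp hF, integral_indicator_const _ hs]
    simp [measureReal_def]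
  have hlogb : ∫ x, -((μ[s.indicator (fun _ => (1 : ℝ)) | F]) x *
      logb 2 ((μ[s.indicator (fun _ => (1 : ℝ)) | F]) x)) ∂μ =
        -(∫ z, g z * log (g z) ∂μ) / log 2 := by
    rw [← integral_neg, ← integral_div]
    refine integral_congr_ae (hg_ae.mono fun z hz => ?_)
    simp only [← hz, logb]
    ring
  have hvar := integral_sq_sub_le_two_mul_integral_mul_log_sub
    (measurable_toReal_condExpKernel hF hs).aestronglyMeasurable
    (ae_of_all _ toReal_condExpKernel_mem_Icc) hg_int
  rw [hlogb, logb]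
  have hlog2 : log 2 ≠ 0 := by positivity
  field_simp
  linarith

theorem integral_sum_sq_toReal_condExpKernel_sub_le {ι : Type*} [Fintype ι] (hF : F ≤ mX)
    {P : ι → Set X} (hP : ∀ i, MeasurableSet (P i)) :
    ∫ z, ∑ i, ((condExpKernel μ F z (P i)).toReal - (μ (P i)).toReal) ^ 2 ∂μ ≤
      2 * log 2 * (entropyH μ P - condEntropyAlg μ F P) := by
  rw [integral_finsetSum _ fun i _ => integrable_sq_toReal_condExpKernel_sub hF (hP i), entropyH,
    condEntropyAlg, ← Finset.sum_neg_distrib, ← Finset.sum_sub_distrib, Finset.mul_sum]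
  exact Finset.sum_le_sum fun i _ => integral_sq_toReal_condExpKernel_sub_le hF (hP i)

theorem exists_measure_ge_sum_sq_toReal_condExpKernel_sub_lt {ι : Type*} [Fintype ι]
    (hF : F ≤ mX) {P : ι → Set X} (hP : ∀ i, MeasurableSet (P i)) {β δ : ℝ} (hδ : 0 < δ)
    (hent : 2 * log 2 * (entropyH μ P - condEntropyAlg μ F P) ≤ β * δ) :
    ∃ Z : Set X, MeasurableSet Z ∧ ENNReal.ofReal (1 - β) ≤ μ Z ∧
      ∀ z ∈ Z, ∑ i, ((condExpKernel μ F z (P i)).toReal - (μ (P i)).toReal) ^ 2 < δ := by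
  set S : X → ℝ := fun z => ∑ i, ((condExpKernel μ F z (P i)).toReal - (μ (P i)).toReal) ^ 2
  have hS : Measurable S := Finset.measurable_sum _ fun i _ =>
    ((measurable_toReal_condExpKernel hF (hP i)).sub_const _).pow_const 2
  have hchebyshev : δ * μ.real {z | δ ≤ S z} ≤ β * δ :=
    (mul_meas_ge_le_integral_of_nonneg (ae_of_all _ fun z => by positivity)
      (integrable_finsetSum _ fun i _ => integrable_sq_toReal_condExpKernel_sub hF (hP i)) δ).trans
      ((integral_sum_sq_toReal_condExpKernel_sub_le hF hP).trans hent)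
  have hbad : MeasurableSet {z | δ ≤ S z} := measurableSet_le measurable_const hS
  refine ⟨{z | δ ≤ S z}ᶜ, hbad.compl, ofReal_one_sub_le_measure_compl hbad ?_,
    fun z hz => not_le.1 hz⟩
  exact le_of_mul_le_mul_left (hchebyshev.trans_eq (mul_comm β δ)) hδ

end Disintegration

section RoughlyEqual

variable {X : Type*} [MeasurableSpace X] {ι : Type*} [Fintype ι] {μ ν : Measure X}
  {P : ι → Set X} {α : ℝ} {n : ℕ} {h : ℝ}

open scoped Classical in
theorem roughlyEqualSameGood_of_goodAtom_imp
    (hgood : ∀ i, GoodAtom μ P α n h i → GoodAtom ν P α n h i)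
    (hsum : 1 - α < ∑ i ∈ Finset.univ.filter (GoodAtom μ P α n h), (ν (P i)).toReal) :
    RoughlyEqualSameGood μ ν P α n h :=
  ⟨hsum.trans_le <| Finset.sum_le_sum_of_subset_of_nonneg
    (Finset.monotone_filter_right _ fun i _ => hgood i) fun _ _ _ => ENNReal.toReal_nonneg,
    hgood, hsum⟩

theorem exists_pos_roughlyEqualSameGood_of_sum_sq_lt (hP : RoughlyEqual μ P α n h) :
    ∃ δ > 0, ∀ ν : Measure X, ∑ i, ((ν (P i)).toReal - (μ (P i)).toReal) ^ 2 < δ →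
      RoughlyEqualSameGood μ ν P α n h := by
  classical
  set G := Finset.univ.filter (GoodAtom μ P α n h)
  set U : Set (ι → ℝ) :=
    (⋂ i ∈ G, {v | 2 ^ (-(n : ℝ) * (h + α)) < v i} ∩ {v | v i < 2 ^ (-(n : ℝ) * (h - α))}) ∩
      {v | 1 - α < ∑ i ∈ G, v i}
  have hU : IsOpen U :=
    (isOpen_biInter_finset fun i _ => (isOpen_lt continuous_const (continuous_apply i)).inter
      (isOpen_lt (continuous_apply i) continuous_const)).inter
      (isOpen_lt continuous_const (continuous_finsetSum _ fun i _ => continuous_apply i))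
  have hμU : (fun i => (μ (P i)).toReal) ∈ U :=
    ⟨mem_iInter₂.2 fun i hi => (Finset.mem_filter.1 hi).2, hP⟩
  obtain ⟨ε, hε, hball⟩ := Metric.isOpen_iff.1 hU _ hμU
  refine ⟨ε ^ 2, by positivity, fun ν hν => ?_⟩
  have hνU : (fun i => (ν (P i)).toReal) ∈ U := hball <| (dist_pi_lt_iff hε).2 fun i => by
    rw [Real.dist_eq]
    exact abs_lt_of_sq_lt_sq ((Finset.single_le_sum (fun j _ => sq_nonneg
      ((ν (P j)).toReal - (μ (P j)).toReal)) (Finset.mem_univ i)).trans_lt hν) hε.le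
  exact roughlyEqualSameGood_of_goodAtom_imp
    (fun i hi => mem_iInter₂.1 hνU.1 i (Finset.mem_filter.2 ⟨Finset.mem_univ i, hi⟩)) hνU.2

end RoughlyEqual

theorem roughlyEqual_of_almostIndependent_general {X : Type*} [mX : MeasurableSpace X]
    [StandardBorelSpace X] (μ : Measure X) [IsProbabilityMeasure μ]
    {l : ℕ} (P : Fin l → Set X) (hPpart : IsPartition P)
    (α h : ℝ) (n : ℕ)
    (hP : RoughlyEqual μ P α n h)
    (β : ℝ) (hβ : 0 < β) :
    ∃ γ : ℝ, 0 < γ ∧ ∀ F : MeasurableSpace X, F ≤ mX →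
      condEntropyAlg (mX := mX) μ F P > entropyH (mX := mX) μ P - γ →
      ∃ Z : Set X, MeasurableSet[mX] Z ∧ ENNReal.ofReal (1 - β) ≤ μ Z ∧
        ∀ z ∈ Z, RoughlyEqualSameGood (mX := mX) μ
          (condExpKernel (mΩ := mX) μ F z) P α n h := by
  obtain ⟨δ, hδ, hstable⟩ := exists_pos_roughlyEqualSameGood_of_sum_sq_lt hP
  have hlog2 : 0 < 2 * log 2 := by positivity
  -- taken before `F` enters the context as a competing `MeasurableSpace` instance
  have hmeas := hPpart.meas
  refine ⟨β * δ / (2 * log 2), by positivity, fun F hF hent => ?_⟩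
  obtain ⟨Z, hZ, hμZ, hclose⟩ := exists_measure_ge_sum_sq_toReal_condExpKernel_sub_lt hF
    hmeas hδ ((le_div_iff₀' hlog2).1 (sub_lt_comm.1 hent).le)
  exact ⟨Z, hZ, hμZ, fun z hz => hstable _ (hclose z hz)⟩

/-- **Fact 2 of the paper.** Suppose `P` is `μ`-roughly equal with parameters `α, n, h`. Then
for every `β > 0` there is `γ > 0` such that whenever a sub-σ-algebra `𝔉` satisfies
`H_μ(P|𝔉) > H_μ(P) - γ`, then for the disintegration measures `μ_z` of `μ` over `𝔉` of `z` in
a set of measure at least `1 - β`, the partition `P` is `μ_z`-roughly equal with the same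
parameters `α, n, h` and with the same good atoms. -/
theorem roughlyEqual_of_almostIndependent {X : Type*} [mX : MeasurableSpace X]
    [StandardBorelSpace X] (μ : Measure X) [IsProbabilityMeasure μ]
    {l : ℕ} (P : Fin l → Set X) (hPpart : IsPartition P)
    (α h : ℝ) (n : ℕ) (hα : 0 < α) (hh : 0 < h)
    (hP : RoughlyEqual μ P α n h)
    (β : ℝ) (hβ : 0 < β) :
    ∃ γ : ℝ, 0 < γ ∧ ∀ F : MeasurableSpace X, F ≤ mX →
      condEntropyAlg (mX := mX) μ F P > entropyH (mX := mX) μ P - γ →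
      ∃ Z : Set X, MeasurableSet[mX] Z ∧ ENNReal.ofReal (1 - β) ≤ μ Z ∧
        ∀ z ∈ Z, RoughlyEqualSameGood (mX := mX) μ
          (condExpKernel (mΩ := mX) μ F z) P α n h :=
  roughlyEqual_of_almostIndependent_general (mX := mX) μ P hPpart α h n hP β hβ
end

section
/- For every l ∈ ℕ and every ε > 0 there exists δ > 0 with the following property: for every standard Borel probability space (X, 𝔅, μ), every finite measurable partition P = {P₁, …, P_l} of X with at most l atoms, and every sub-σ-algebra 𝔉 ⊆ 𝔅 with H_μ(P|𝔉) > H_μ(P) − δ, the set of points z ∈ X for which the disintegration measure μ_z of μ over 𝔉 satisfies Σ_{i=1}^{l} |μ(Pᵢ) − μ_z(Pᵢ)| < ε has μ-measure at least 1 − ε. -/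
/-! The function `t ↦ -t log t` is `1`-strongly concave on `[0, 1]`, so Jensen's inequality for
it has a quadratic defect: for `g = μ_z(Pᵢ)`, whose mean is `μ(Pᵢ)`,
`∫ -g log g ≤ -μ(Pᵢ) log μ(Pᵢ) - Var(g) / 2`. Summing over `i`, the entropy gap
`H(P) - H(P|𝔉)` bounds `∑ᵢ Var(μ_·(Pᵢ))` up to the factor `2 log 2`, and Chebyshev's inequality
with Cauchy–Schwarz turns this into the `ℓ¹` bound outside a set of small measure. -/

open MeasureTheory ProbabilityTheory

open Real Set

lemma ConvexOn.add_mul_sub_le_of_hasDerivAt {S : Set ℝ} {f : ℝ → ℝ} {x y f' : ℝ}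
    (hf : ConvexOn ℝ S f) (hx : x ∈ S) (hy : y ∈ S) (hd : HasDerivAt f f' x) :
    f x + f' * (y - x) ≤ f y := by
  rcases lt_trichotomy x y with hxy | rfl | hyx
  · have := hf.le_slope_of_hasDerivAt hx hy hxy hd
    rw [slope_def_field, le_div_iff₀ (sub_pos.mpr hxy)] at this
    linarith
  · simp
  · have := hf.slope_le_of_hasDerivAt hy hx hyx hd
    rw [slope_def_field, div_le_iff₀ (sub_pos.mpr hyx)] at this
    linarith

lemma Real.monotoneOn_log_sub_self : MonotoneOn (fun x ↦ log x - x) (Ioc 0 1) := by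
  intro x ⟨hx0, _⟩ y ⟨hy0, hy1⟩ hxy
  have hlog : 1 - x / y ≤ log y - log x := by
    rw [← log_div hy0.ne' hx0.ne', ← inv_div]
    exact one_sub_inv_le_log_of_pos (div_pos hy0 hx0)
  have : y - x ≤ 1 - x / y := by
    rw [one_sub_div hy0.ne', le_div_iff₀ hy0]
    nlinarith
  dsimp only
  linarith

lemma Real.hasDerivAt_mul_log_sub_sq_div_two {x : ℝ} (hx : x ≠ 0) :
    HasDerivAt (fun x ↦ x * log x - x ^ 2 / 2) (log x - x + 1) x :=
  ((hasDerivAt_mul_log hx).sub ((hasDerivAt_pow 2 x).div_const 2)).congr_deriv (by ring)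

lemma Real.convexOn_mul_log_sub_sq_div_two :
    ConvexOn ℝ (Icc 0 1) (fun x ↦ x * log x - x ^ 2 / 2) := by
  have hd (x : ℝ) (hx : x ∈ Ioo 0 1) := hasDerivAt_mul_log_sub_sq_div_two hx.1.ne'
  refine MonotoneOn.convexOn_of_deriv (convex_Icc 0 1) (by fun_prop) ?_ ?_ <;> rw [interior_Icc]
  · exact fun x hx ↦ (hd x hx).differentiableAt.differentiableWithinAt
  · exact ((monotoneOn_log_sub_self.mono Ioo_subset_Ioc_self).add_const 1).congr
      fun x hx ↦ (hd x hx).deriv.symm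

lemma Real.negMulLog_le_of_mem_Icc {b t : ℝ} (hb0 : 0 < b) (hb1 : b ≤ 1) (ht : t ∈ Icc 0 1) :
    negMulLog t ≤ negMulLog b - (log b + 1) * (t - b) - (t - b) ^ 2 / 2 := by
  have := convexOn_mul_log_sub_sq_div_two.add_mul_sub_le_of_hasDerivAt ⟨hb0.le, hb1⟩ ht
    (hasDerivAt_mul_log_sub_sq_div_two hb0.ne')
  simp only [negMulLog_eq_neg]
  linear_combination this

lemma integral_negMulLog_le_negMulLog_integral_sub_variance {X : Type*} {mX : MeasurableSpace X}
    {μ : Measure X} [IsProbabilityMeasure μ] {g : X → ℝ} (hg : AEMeasurable g μ)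
    (hg01 : ∀ᵐ x ∂μ, g x ∈ Icc 0 1) :
    ∫ x, negMulLog (g x) ∂μ ≤ negMulLog μ[g] - Var[g; μ] / 2 := by
  have hg_int : Integrable g μ := .of_mem_Icc 0 1 hg hg01
  have hb0 : 0 ≤ μ[g] := integral_nonneg_of_ae (hg01.mono fun _ hx ↦ hx.1)
  rcases hb0.eq_or_lt with hb | hb
  · have hg0 : g =ᵐ[μ] 0 :=
      (integral_eq_zero_iff_of_nonneg_ae (hg01.mono fun _ hx ↦ hx.1) hg_int).mp hb.symm
    rw [← hb, variance_congr hg0, variance_zero,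
      integral_congr_ae (hg0.mono fun _ hx ↦ congrArg negMulLog hx)]
    simp
  have hb1 : μ[g] ≤ 1 := by
    simpa using integral_mono_ae hg_int (integrable_const 1) (hg01.mono fun _ hx ↦ hx.2)
  have hsq_int : Integrable (fun x ↦ (g x - μ[g]) ^ 2) μ :=
    (memLp_of_bounded hg01 hg.aestronglyMeasurable 2).sub (memLp_const _) |>.integrable_sq
  have hφ_int : Integrable (fun x ↦ negMulLog (g x)) μ :=
    .of_mem_Icc 0 1 (continuous_negMulLog.measurable.comp_aemeasurable hg) <|
      hg01.mono fun _ hx ↦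
        ⟨negMulLog_nonneg hx.1 hx.2, (negMulLog_le_one_sub_self hx.1).trans (sub_le_self 1 hx.1)⟩
  have hgb_int : Integrable (fun x ↦ g x - μ[g]) μ := hg_int.sub (integrable_const _)
  have hlin_int : Integrable (fun x ↦ negMulLog μ[g] - (log μ[g] + 1) * (g x - μ[g])) μ :=
    (integrable_const _).sub (hgb_int.const_mul _)
  calc ∫ x, negMulLog (g x) ∂μ
      ≤ ∫ x, negMulLog μ[g] - (log μ[g] + 1) * (g x - μ[g]) - (g x - μ[g]) ^ 2 / 2 ∂μ :=
        integral_mono_ae hφ_int (hlin_int.sub (hsq_int.div_const 2)) <|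
          hg01.mono fun _ hx ↦ negMulLog_le_of_mem_Icc hb hb1 hx
    _ = negMulLog μ[g] - Var[g; μ] / 2 := by
        rw [integral_sub hlin_int (hsq_int.div_const 2), integral_sub (integrable_const _)
          (hgb_int.const_mul _), integral_const_mul,
          integral_sub hg_int (integrable_const _), integral_div, variance_eq_integral hg]
        simp

lemma one_sub_card_mul_sum_variance_div_sq_le_measureReal {X : Type*} {mX : MeasurableSpace X}
    {μ : Measure X} [IsProbabilityMeasure μ] {ι : Type*} [Fintype ι] {f : ι → X → ℝ}
    (hf : ∀ i, MemLp (f i) 2 μ) {ε : ℝ} (hε : 0 < ε) :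
    1 - (Fintype.card ι * ∑ i, Var[f i; μ]) / ε ^ 2 ≤
      μ.real {x | ∑ i, |μ[f i] - f i x| < ε} := by
  set S := {x | ∑ i, |μ[f i] - f i x| < ε}
  set Y : X → ℝ := fun x ↦ Fintype.card ι * ∑ i, (f i x - μ[f i]) ^ 2
  have hsq_int (i : ι) : Integrable (fun x ↦ (f i x - μ[f i]) ^ 2) μ :=
    ((hf i).sub (memLp_const _)).integrable_sq
  have hY_int : Integrable Y μ := (integrable_finsetSum _ fun i _ ↦ hsq_int i).const_mul _
  have hY : ∫ x, Y x ∂μ = Fintype.card ι * ∑ i, Var[f i; μ] := by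
    rw [integral_const_mul, integral_finsetSum _ fun i _ ↦ hsq_int i]
    simp only [variance_eq_integral (hf _).aestronglyMeasurable.aemeasurable]
  have hsub : Sᶜ ⊆ {x | ε ^ 2 ≤ Y x} := by
    intro x hx
    have hεS : ε ≤ ∑ i, |μ[f i] - f i x| := not_lt.mp hx
    calc ε ^ 2 ≤ (∑ i, |μ[f i] - f i x|) ^ 2 := pow_le_pow_left₀ hε.le hεS 2
      _ ≤ Fintype.card ι * ∑ i, |μ[f i] - f i x| ^ 2 := sq_sum_le_card_mul_sum_sq
      _ = Y x := by simp only [Y, sq_abs, ← neg_sub (f _ x), neg_sq]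
  have hmarkov := mul_meas_ge_le_integral_of_nonneg
    (.of_forall fun x ↦ by positivity : 0 ≤ᵐ[μ] Y) hY_int (ε ^ 2)
  have hcompl : μ.real Sᶜ ≤ (Fintype.card ι * ∑ i, Var[f i; μ]) / ε ^ 2 := by
    rw [le_div_iff₀ (by positivity), mul_comm, ← hY]
    exact (mul_le_mul_of_nonneg_left (measureReal_mono hsub) (by positivity)).trans hmarkov
  have hunion := measureReal_union_le (μ := μ) S Sᶜ
  rw [Set.union_compl_self, probReal_univ] at hunion
  linarith

section Entropy

variable {X : Type*} {F : MeasurableSpace X} [mX : MeasurableSpace X] {μ : Measure X}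
  {ι : Type*} [Fintype ι] {P : ι → Set X}

lemma entropyH_eq_sum_negMulLog : entropyH μ P = (∑ i, negMulLog (μ.real (P i))) / log 2 := by
  simp only [entropyH, negMulLog, logb, measureReal_def, Finset.sum_div, ← Finset.sum_neg_distrib]
  congr! 1 with i
  ring

section Finite

variable [StandardBorelSpace X] [IsFiniteMeasure μ]

lemma measurable_condExpKernel_real (hF : F ≤ mX) {s : Set X} (hs : MeasurableSet s) :
    Measurable fun z ↦ (condExpKernel μ F z).real s :=
  ((measurable_condExpKernel hs).mono hF le_rfl).ennreal_toReal

lemma integral_condExpKernel_real (hF : F ≤ mX) {s : Set X} (hs : MeasurableSet s) :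
    ∫ z, (condExpKernel μ F z).real s ∂μ = μ.real s := by
  rw [integral_congr_ae (condExpKernel_ae_eq_condExp hF hs), integral_condExp hF,
    integral_indicator_const _ hs, smul_eq_mul, mul_one]

lemma condEntropyAlg_eq_sum_integral_negMulLog (hF : F ≤ mX) (hP : ∀ i, MeasurableSet (P i)) :
    condEntropyAlg μ F P =
      (∑ i, ∫ z, negMulLog ((condExpKernel μ F z).real (P i)) ∂μ) / log 2 := by
  simp only [condEntropyAlg, Finset.sum_div, ← integral_div]
  refine Finset.sum_congr rfl fun i _ ↦ integral_congr_ae ?_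
  filter_upwards [condExpKernel_ae_eq_condExp (μ := μ) hF (hP i)] with z hz
  rw [hz, negMulLog, logb]
  ring

end Finite

variable [StandardBorelSpace X] [IsProbabilityMeasure μ]

lemma sum_variance_condExpKernel_le (hF : F ≤ mX) (hP : ∀ i, MeasurableSet (P i)) :
    (∑ i, Var[fun z ↦ (condExpKernel μ F z).real (P i); μ]) / 2 ≤
      log 2 * (entropyH μ P - condEntropyAlg μ F P) := by
  have hdefect (i : ι) := integral_negMulLog_le_negMulLog_integral_sub_variance (μ := μ)
    (g := fun z ↦ (condExpKernel μ F z).real (P i))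
    (measurable_condExpKernel_real hF (hP i)).aemeasurable
    (.of_forall fun z ↦ ⟨measureReal_nonneg, measureReal_le_one⟩)
  simp only [integral_condExpKernel_real hF (hP _)] at hdefect
  rw [entropyH_eq_sum_negMulLog, condEntropyAlg_eq_sum_integral_negMulLog hF hP, ← sub_div,
    mul_div_cancel₀ _ (log_pos one_lt_two).ne', Finset.sum_div]
  have hsum := Finset.sum_le_sum fun i (_ : i ∈ Finset.univ) ↦ hdefect i
  rw [Finset.sum_sub_distrib] at hsum
  linarith

lemma one_sub_le_measureReal_sum_abs_sub_condExpKernel_lt (hF : F ≤ mX)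
    (hP : ∀ i, MeasurableSet (P i)) {ε : ℝ} (hε : 0 < ε) :
    1 - 2 * log 2 * Fintype.card ι * (entropyH μ P - condEntropyAlg μ F P) / ε ^ 2 ≤
      μ.real {z | ∑ i, |μ.real (P i) - (condExpKernel μ F z).real (P i)| < ε} := by
  have hmemLp (i : ι) : MemLp (fun z ↦ (condExpKernel μ F z).real (P i)) 2 μ :=
    memLp_of_bounded (.of_forall fun z ↦ ⟨measureReal_nonneg, measureReal_le_one⟩)
      (measurable_condExpKernel_real hF (hP i)).aestronglyMeasurable 2
  have hcheb := one_sub_card_mul_sum_variance_div_sq_le_measureReal hmemLp hε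
  simp only [integral_condExpKernel_real hF (hP _)] at hcheb
  refine le_trans (sub_le_sub_left (div_le_div_of_nonneg_right ?_ (sq_nonneg ε)) 1) hcheb
  have hvar := mul_le_mul_of_nonneg_left (sum_variance_condExpKernel_le (μ := μ) hF hP)
    (Nat.cast_nonneg (Fintype.card ι) : (0 : ℝ) ≤ Fintype.card ι)
  linarith

end Entropy

/-- **Near-independence gives ℓ¹-closeness of disintegration measures.** For every `l` and
`ε > 0` there is `δ > 0` such that for every standard Borel probability space `(X, 𝔅, μ)`,
every finite measurable partition `P` of `X` with (at most) `l` atoms, and every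
sub-σ-algebra `𝔉 ⊆ 𝔅` with `H_μ(P|𝔉) > H_μ(P) - δ`, the set of points `z` whose
disintegration measure `μ_z` of `μ` over `𝔉` satisfies
`∑ᵢ |μ(Pᵢ) - μ_z(Pᵢ)| < ε` has `μ`-measure at least `1 - ε`. -/
theorem ellOne_close_of_almostIndependent (l : ℕ) (ε : ℝ) (hε : 0 < ε) :
    ∃ δ : ℝ, 0 < δ ∧
      ∀ (X : Type) (mX : MeasurableSpace X), ∀ (_ : @StandardBorelSpace X mX)
        (μ : @Measure X mX), ∀ (_ : @IsProbabilityMeasure X mX μ)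
        (P : Fin l → Set X), IsPartition (mX := mX) P →
        ∀ F : MeasurableSpace X, F ≤ mX →
          condEntropyAlg (mX := mX) μ F P > entropyH (mX := mX) μ P - δ →
          ENNReal.ofReal (1 - ε) ≤
            μ {z : X | ∑ i : Fin l,
              |(μ (P i)).toReal - ((condExpKernel (mΩ := mX) μ F z) (P i)).toReal| < ε} := by
  refine ⟨ε ^ 3 / (2 * log 2 * ((l : ℝ) + 1)), by positivity, ?_⟩
  intro X mX _ μ _ P hP F hF hgap
  refine ENNReal.ofReal_le_of_le_toReal <| le_trans ?_ <|
    one_sub_le_measureReal_sum_abs_sub_condExpKernel_lt (mX := mX) (μ := μ) hF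
      (IsPartition.meas (mX := mX) hP) hε
  rw [Fintype.card_fin, sub_le_sub_iff_left, div_le_iff₀ (by positivity)]
  have hlog2 : 0 < log 2 := log_pos one_lt_two
  have hgap' := (lt_div_iff₀ (by positivity)).mp (sub_lt_comm.mp hgap)
  generalize entropyH (mX := mX) μ P - condEntropyAlg (mX := mX) μ F P = gap at hgap' ⊢
  rcases le_or_gt gap 0 with hle | hpos
  · nlinarith [mul_nonpos_of_nonneg_of_nonpos (by positivity : 0 ≤ 2 * log 2 * l) hle]
  · nlinarith [mul_pos (by positivity : 0 < 2 * log 2) hpos]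
end
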